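/- arXiv:1701.06536 — 5 statements merged into one kernel-verified Lean document; each statement's English description precedes it below -/
import Mathlib

section
/- The linear program: minimize s₁ + s₂ + s₃ subject to (t/(t−1))s₁ + s₂ + s₃ ≥ 1, s₁ + (2t−1)s₂ + s₃ ≥ 1, s ≥ 0, where t > 1 is real, has optimal value (2t² − 4t + 3)/(2t² − 2t + 1), attained at s₁ = 2(t−1)²/(2t²−2t+1), s₂ = 1/(2t²−2t+1), s₃ = 0. -/
/-!
The optimal point `s = (2(t-1)², 1, 0) / (2t² - 2t + 1)` makes both constraints tight, and the
same vector `y = (s₁, s₂)` is a feasible solution of the dual program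
`max y₁ + y₂` s.t. `(t/(t-1)) y₁ + y₂ ≤ 1`, `y₁ + (2t-1) y₂ ≤ 1`, `y₁ + y₂ ≤ 1`, `y ≥ 0`
(the first two dual constraints are the two primal equalities, the third is `t ≥ 1`).
Weak duality then shows that no feasible point does better than `y₁ + y₂ = s₁ + s₂`.
-/

theorem le_add_add_of_dual_feasible {a₁ a₂ a₃ b₁ b₂ b₃ y₁ y₂ s₁ s₂ s₃ : ℝ}
    (hy₁ : 0 ≤ y₁) (hy₂ : 0 ≤ y₂) (hs₁ : 0 ≤ s₁) (hs₂ : 0 ≤ s₂) (hs₃ : 0 ≤ s₃)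
    (hcol₁ : a₁ * y₁ + b₁ * y₂ ≤ 1) (hcol₂ : a₂ * y₁ + b₂ * y₂ ≤ 1)
    (hcol₃ : a₃ * y₁ + b₃ * y₂ ≤ 1)
    (hrow₁ : 1 ≤ a₁ * s₁ + a₂ * s₂ + a₃ * s₃) (hrow₂ : 1 ≤ b₁ * s₁ + b₂ * s₂ + b₃ * s₃) :
    y₁ + y₂ ≤ s₁ + s₂ + s₃ :=
  calc y₁ + y₂ ≤ y₁ * (a₁ * s₁ + a₂ * s₂ + a₃ * s₃) + y₂ * (b₁ * s₁ + b₂ * s₂ + b₃ * s₃) := by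
        linarith [mul_le_mul_of_nonneg_left hrow₁ hy₁, mul_le_mul_of_nonneg_left hrow₂ hy₂]
    _ = s₁ * (a₁ * y₁ + b₁ * y₂) + s₂ * (a₂ * y₁ + b₂ * y₂) + s₃ * (a₃ * y₁ + b₃ * y₂) := by
        ring
    _ ≤ s₁ + s₂ + s₃ := by
        linarith [mul_le_mul_of_nonneg_left hcol₁ hs₁, mul_le_mul_of_nonneg_left hcol₂ hs₂,
          mul_le_mul_of_nonneg_left hcol₃ hs₃]

theorem two_mul_sq_sub_two_mul_add_one_pos (t : ℝ) : 0 < 2 * t ^ 2 - 2 * t + 1 := by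
  nlinarith [sq_nonneg (2 * t - 1)]

section

variable {t : ℝ}

theorem first_constraint_tight (ht : t ≠ 1) :
    t / (t - 1) * (2 * (t - 1) ^ 2 / (2 * t ^ 2 - 2 * t + 1)) +
      1 / (2 * t ^ 2 - 2 * t + 1) = 1 := by
  have ht₁ : t - 1 ≠ 0 := sub_ne_zero.mpr ht
  have hmul : t / (t - 1) * (2 * (t - 1) ^ 2) = 2 * t * (t - 1) := by
    field_simp
  rw [← mul_div_assoc, hmul, ← add_div,
    div_eq_one_iff_eq (two_mul_sq_sub_two_mul_add_one_pos t).ne']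
  ring

theorem second_constraint_tight :
    2 * (t - 1) ^ 2 / (2 * t ^ 2 - 2 * t + 1) +
      (2 * t - 1) * (1 / (2 * t ^ 2 - 2 * t + 1)) = 1 := by
  rw [mul_one_div, ← add_div, div_eq_one_iff_eq (two_mul_sq_sub_two_mul_add_one_pos t).ne']
  ring

theorem optimal_value_eq :
    (2 * t ^ 2 - 4 * t + 3) / (2 * t ^ 2 - 2 * t + 1) =
      2 * (t - 1) ^ 2 / (2 * t ^ 2 - 2 * t + 1) + 1 / (2 * t ^ 2 - 2 * t + 1) := by
  rw [← add_div]
  ring_nf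

theorem optimal_value_le_one (ht : 1 ≤ t) :
    (2 * t ^ 2 - 4 * t + 3) / (2 * t ^ 2 - 2 * t + 1) ≤ 1 := by
  rw [div_le_one (two_mul_sq_sub_two_mul_add_one_pos t)]
  linarith

end

/-- The LP `min s₁+s₂+s₃` s.t. `(t/(t-1))s₁+s₂+s₃ ≥ 1`, `s₁+(2t-1)s₂+s₃ ≥ 1`, `s ≥ 0`
(with `t > 1`) has optimal value `(2t²-4t+3)/(2t²-2t+1)`, attained at the stated point. -/
theorem stmt_5 (t : ℝ) (ht : 1 < t) :
    IsLeast {v : ℝ | ∃ s₁ s₂ s₃ : ℝ, 0 ≤ s₁ ∧ 0 ≤ s₂ ∧ 0 ≤ s₃ ∧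
        1 ≤ (t / (t - 1)) * s₁ + s₂ + s₃ ∧ 1 ≤ s₁ + (2 * t - 1) * s₂ + s₃ ∧
        v = s₁ + s₂ + s₃}
      ((2 * t ^ 2 - 4 * t + 3) / (2 * t ^ 2 - 2 * t + 1)) ∧
    (0 ≤ 2 * (t - 1) ^ 2 / (2 * t ^ 2 - 2 * t + 1) ∧
      0 ≤ 1 / (2 * t ^ 2 - 2 * t + 1) ∧
      1 ≤ (t / (t - 1)) * (2 * (t - 1) ^ 2 / (2 * t ^ 2 - 2 * t + 1)) +
          1 / (2 * t ^ 2 - 2 * t + 1) + 0 ∧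
      1 ≤ 2 * (t - 1) ^ 2 / (2 * t ^ 2 - 2 * t + 1) +
          (2 * t - 1) * (1 / (2 * t ^ 2 - 2 * t + 1)) + 0 ∧
      (2 * t ^ 2 - 4 * t + 3) / (2 * t ^ 2 - 2 * t + 1) =
        2 * (t - 1) ^ 2 / (2 * t ^ 2 - 2 * t + 1) + 1 / (2 * t ^ 2 - 2 * t + 1) + 0) := by
  have hD := two_mul_sq_sub_two_mul_add_one_pos t
  have htight₁ := first_constraint_tight ht.ne'
  have htight₂ := second_constraint_tight (t := t)
  have hcol₃ := optimal_value_le_one ht.le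
  rw [optimal_value_eq] at hcol₃ ⊢
  set y₁ := 2 * (t - 1) ^ 2 / (2 * t ^ 2 - 2 * t + 1)
  set y₂ := 1 / (2 * t ^ 2 - 2 * t + 1)
  have hy₁ : 0 ≤ y₁ := div_nonneg (by positivity) hD.le
  have hy₂ : 0 ≤ y₂ := div_nonneg zero_le_one hD.le
  have hfeas₁ : 1 ≤ t / (t - 1) * y₁ + y₂ + 0 := by rw [add_zero, htight₁]
  have hfeas₂ : 1 ≤ y₁ + (2 * t - 1) * y₂ + 0 := by rw [add_zero, htight₂]
  refine ⟨⟨⟨y₁, y₂, 0, hy₁, hy₂, le_rfl, hfeas₁, hfeas₂, (add_zero _).symm⟩, ?_⟩,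
    hy₁, hy₂, hfeas₁, hfeas₂, (add_zero _).symm⟩
  rintro v ⟨s₁, s₂, s₃, hs₁, hs₂, hs₃, hrow₁, hrow₂, rfl⟩
  exact le_add_add_of_dual_feasible (a₁ := t / (t - 1)) (a₂ := 1) (a₃ := 1) (b₁ := 1)
    (b₂ := 2 * t - 1) (b₃ := 1) hy₁ hy₂ hs₁ hs₂ hs₃
    (by linarith) (by linarith) (by linarith) (by linarith) (by linarith)
end

section
/- Let f = (f₁, f₂) ∈ ℝ² with f₁ + f₂ > 1, f₁ < 1, f₂ < 1 (i.e. f interior to the triangle with vertices (1,0), (0,1), (1,1)). Then the linear program: minimize s₁ + s₂ + s₃ subject to ((f₁+f₂)/(f₁+f₂−1))s₁ + s₂ + s₃ ≥ 1, s₁ + ((2−f₁)/(1−f₁))s₂ + s₃ ≥ 1, s₁ + s₂ + ((2−f₂)/(1−f₂))s₃ ≥ 1, s ≥ 0, has optimal value 1/2, attained at s₁ = (f₁+f₂−1)/2, s₂ = (1−f₁)/2, s₃ = (1−f₂)/2. -/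
/-- For `f` interior to the triangle with vertices `(1,0)`, `(0,1)`, `(1,1)`,
the split-closure LP has optimal value `1/2`, attained at the stated point. -/
theorem stmt_7 (f₁ f₂ : ℝ) (hf : 1 < f₁ + f₂) (hf1 : f₁ < 1) (hf2 : f₂ < 1) :
    IsLeast {v : ℝ | ∃ s₁ s₂ s₃ : ℝ, 0 ≤ s₁ ∧ 0 ≤ s₂ ∧ 0 ≤ s₃ ∧
        1 ≤ ((f₁ + f₂) / (f₁ + f₂ - 1)) * s₁ + s₂ + s₃ ∧
        1 ≤ s₁ + ((2 - f₁) / (1 - f₁)) * s₂ + s₃ ∧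
        1 ≤ s₁ + s₂ + ((2 - f₂) / (1 - f₂)) * s₃ ∧
        v = s₁ + s₂ + s₃} (1 / 2) ∧
    (0 ≤ (f₁ + f₂ - 1) / 2 ∧ 0 ≤ (1 - f₁) / 2 ∧ 0 ≤ (1 - f₂) / 2 ∧
      1 ≤ ((f₁ + f₂) / (f₁ + f₂ - 1)) * ((f₁ + f₂ - 1) / 2) + (1 - f₁) / 2 + (1 - f₂) / 2 ∧
      1 ≤ (f₁ + f₂ - 1) / 2 + ((2 - f₁) / (1 - f₁)) * ((1 - f₁) / 2) + (1 - f₂) / 2 ∧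
      1 ≤ (f₁ + f₂ - 1) / 2 + (1 - f₁) / 2 + ((2 - f₂) / (1 - f₂)) * ((1 - f₂) / 2) ∧
      (1 : ℝ) / 2 = (f₁ + f₂ - 1) / 2 + (1 - f₁) / 2 + (1 - f₂) / 2) := by
  have hd1 : (0:ℝ) < f₁ + f₂ - 1 := by linarith
  have hd2 : (0:ℝ) < 1 - f₁ := by linarith
  have hd3 : (0:ℝ) < 1 - f₂ := by linarith
  have e1 : ((f₁ + f₂) / (f₁ + f₂ - 1)) * ((f₁ + f₂ - 1) / 2) = (f₁ + f₂) / 2 := by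
    field_simp
  have e2 : ((2 - f₁) / (1 - f₁)) * ((1 - f₁) / 2) = (2 - f₁) / 2 := by
    field_simp
  have e3 : ((2 - f₂) / (1 - f₂)) * ((1 - f₂) / 2) = (2 - f₂) / 2 := by
    field_simp
  have hatt : (0 ≤ (f₁ + f₂ - 1) / 2 ∧ 0 ≤ (1 - f₁) / 2 ∧ 0 ≤ (1 - f₂) / 2 ∧
      1 ≤ ((f₁ + f₂) / (f₁ + f₂ - 1)) * ((f₁ + f₂ - 1) / 2) + (1 - f₁) / 2 + (1 - f₂) / 2 ∧
      1 ≤ (f₁ + f₂ - 1) / 2 + ((2 - f₁) / (1 - f₁)) * ((1 - f₁) / 2) + (1 - f₂) / 2 ∧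
      1 ≤ (f₁ + f₂ - 1) / 2 + (1 - f₁) / 2 + ((2 - f₂) / (1 - f₂)) * ((1 - f₂) / 2) ∧
      (1 : ℝ) / 2 = (f₁ + f₂ - 1) / 2 + (1 - f₁) / 2 + (1 - f₂) / 2) := by
    refine ⟨by linarith, by linarith, by linarith, ?_, ?_, ?_, by ring⟩
    · rw [e1]; linarith
    · rw [e2]; linarith
    · rw [e3]; linarith
  refine ⟨⟨⟨(f₁ + f₂ - 1) / 2, (1 - f₁) / 2, (1 - f₂) / 2,
      hatt.1, hatt.2.1, hatt.2.2.1, hatt.2.2.2.1, hatt.2.2.2.2.1, hatt.2.2.2.2.2.1,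
      hatt.2.2.2.2.2.2⟩, ?_⟩, hatt⟩
  rintro v ⟨s₁, s₂, s₃, h1, h2, h3, hA, hB, hC, rfl⟩
  have hA' : f₁ + f₂ - 1 ≤ (f₁ + f₂) * s₁ + (f₁ + f₂ - 1) * s₂ + (f₁ + f₂ - 1) * s₃ := by
    have := mul_le_mul_of_nonneg_right hA hd1.le
    have key : ((f₁ + f₂) / (f₁ + f₂ - 1)) * s₁ * (f₁ + f₂ - 1) = (f₁ + f₂) * s₁ := by
      field_simp
    nlinarith [this]
  have hB' : 1 - f₁ ≤ (1 - f₁) * s₁ + (2 - f₁) * s₂ + (1 - f₁) * s₃ := by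
    have := mul_le_mul_of_nonneg_right hB hd2.le
    have key : ((2 - f₁) / (1 - f₁)) * s₂ * (1 - f₁) = (2 - f₁) * s₂ := by
      field_simp
    nlinarith [this]
  have hC' : 1 - f₂ ≤ (1 - f₂) * s₁ + (1 - f₂) * s₂ + (2 - f₂) * s₃ := by
    have := mul_le_mul_of_nonneg_right hC hd3.le
    have key : ((2 - f₂) / (1 - f₂)) * s₃ * (1 - f₂) = (2 - f₂) * s₃ := by
      field_simp
    nlinarith [this]
  linarith
end

section
/- Let f = (f₁, f₂) ∈ ℝ² with f₁ ≥ 0, f₂ ≥ 0, f₁ + f₂ ≤ 1, and f₁ < 1, f₂ < 1. Then the linear program: minimize s₁ + s₂ + s₃ subject to s₁ + ((2−f₁)/(1−f₁))s₂ + s₃ ≥ 1, s₁ + s₂ + ((2−f₂)/(1−f₂))s₃ ≥ 1, s ≥ 0, has optimal value 1 − 1/(3 − f₁ − f₂), attained at s₁ = 0, s₂ = (1−f₁)/(3−f₁−f₂), s₃ = (1−f₂)/(3−f₁−f₂). -/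
/-!
Weak duality: multiplying the two constraints by `(1 - f₁) / D` and `(1 - f₂) / D`, where
`D = 3 - f₁ - f₂`, and adding gives `s₁ + s₂ + s₃ ≥ 1 - 1 / D + s₁ / D`. The stated point has
`s₁ = 0` and makes both constraints tight, so it attains this bound.
-/

section TwoSplitLP

variable {f₁ f₂ : ℝ}

theorem two_split_lp_lower_bound (hf₁ : f₁ < 1) (hf₂ : f₂ < 1) {s₁ s₂ s₃ : ℝ} (hs₁ : 0 ≤ s₁)
    (h₁ : 1 ≤ s₁ + ((2 - f₁) / (1 - f₁)) * s₂ + s₃)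
    (h₂ : 1 ≤ s₁ + s₂ + ((2 - f₂) / (1 - f₂)) * s₃) :
    1 - 1 / (3 - f₁ - f₂) ≤ s₁ + s₂ + s₃ := by
  have ha : 0 < 1 - f₁ := sub_pos.2 hf₁
  have hb : 0 < 1 - f₂ := sub_pos.2 hf₂
  have h₁' := (le_mul_iff_one_le_right ha).2 h₁
  have h₂' := (le_mul_iff_one_le_right hb).2 h₂
  have hc₁ : (1 - f₁) * ((2 - f₁) / (1 - f₁)) = 2 - f₁ := mul_div_cancel₀ _ ha.ne'
  have hc₂ : (1 - f₂) * ((2 - f₂) / (1 - f₂)) = 2 - f₂ := mul_div_cancel₀ _ hb.ne'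
  rw [one_sub_div (by linarith), div_le_iff₀ (by linarith)]
  linear_combination h₁' + h₂' + hs₁ + s₂ * hc₁ + s₃ * hc₂

theorem two_split_lp_optimal_point (hf₁ : f₁ < 1) (hf₂ : f₂ < 1) :
    0 ≤ (1 - f₁) / (3 - f₁ - f₂) ∧ 0 ≤ (1 - f₂) / (3 - f₁ - f₂) ∧
      1 ≤ 0 + ((2 - f₁) / (1 - f₁)) * ((1 - f₁) / (3 - f₁ - f₂)) + (1 - f₂) / (3 - f₁ - f₂) ∧
      1 ≤ 0 + (1 - f₁) / (3 - f₁ - f₂) + ((2 - f₂) / (1 - f₂)) * ((1 - f₂) / (3 - f₁ - f₂)) ∧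
      1 - 1 / (3 - f₁ - f₂) = 0 + (1 - f₁) / (3 - f₁ - f₂) + (1 - f₂) / (3 - f₁ - f₂) := by
  have ha : 0 < 1 - f₁ := sub_pos.2 hf₁
  have hb : 0 < 1 - f₂ := sub_pos.2 hf₂
  have hD : 0 < 3 - f₁ - f₂ := by linarith
  refine ⟨by positivity, by positivity, le_of_eq ?_, le_of_eq ?_, ?_⟩ <;> field_simp <;> ring

end TwoSplitLP

theorem stmt_8_general (f₁ f₂ : ℝ)
    (hf1' : f₁ < 1) (hf2' : f₂ < 1) :
    IsLeast {v : ℝ | ∃ s₁ s₂ s₃ : ℝ, 0 ≤ s₁ ∧ 0 ≤ s₂ ∧ 0 ≤ s₃ ∧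
        1 ≤ s₁ + ((2 - f₁) / (1 - f₁)) * s₂ + s₃ ∧
        1 ≤ s₁ + s₂ + ((2 - f₂) / (1 - f₂)) * s₃ ∧
        v = s₁ + s₂ + s₃} (1 - 1 / (3 - f₁ - f₂)) ∧
    (0 ≤ (1 - f₁) / (3 - f₁ - f₂) ∧ 0 ≤ (1 - f₂) / (3 - f₁ - f₂) ∧
      1 ≤ 0 + ((2 - f₁) / (1 - f₁)) * ((1 - f₁) / (3 - f₁ - f₂)) + (1 - f₂) / (3 - f₁ - f₂) ∧
      1 ≤ 0 + (1 - f₁) / (3 - f₁ - f₂) + ((2 - f₂) / (1 - f₂)) * ((1 - f₂) / (3 - f₁ - f₂)) ∧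
      1 - 1 / (3 - f₁ - f₂) = 0 + (1 - f₁) / (3 - f₁ - f₂) + (1 - f₂) / (3 - f₁ - f₂)) := by
  have hopt := two_split_lp_optimal_point hf1' hf2'
  refine ⟨⟨⟨0, _, _, le_rfl, hopt⟩, ?_⟩, hopt⟩
  rintro v ⟨s₁, s₂, s₃, hs₁, -, -, h₁, h₂, rfl⟩
  exact two_split_lp_lower_bound hf1' hf2' hs₁ h₁ h₂

/-- For `f` in the corner triangle `f₁, f₂ ≥ 0`, `f₁+f₂ ≤ 1`, the two-split LP has
optimal value `1 - 1/(3-f₁-f₂)`, attained at the stated point. -/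
theorem stmt_8 (f₁ f₂ : ℝ) (hf1 : 0 ≤ f₁) (hf2 : 0 ≤ f₂) (hsum : f₁ + f₂ ≤ 1)
    (hf1' : f₁ < 1) (hf2' : f₂ < 1) :
    IsLeast {v : ℝ | ∃ s₁ s₂ s₃ : ℝ, 0 ≤ s₁ ∧ 0 ≤ s₂ ∧ 0 ≤ s₃ ∧
        1 ≤ s₁ + ((2 - f₁) / (1 - f₁)) * s₂ + s₃ ∧
        1 ≤ s₁ + s₂ + ((2 - f₂) / (1 - f₂)) * s₃ ∧
        v = s₁ + s₂ + s₃} (1 - 1 / (3 - f₁ - f₂)) ∧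
    (0 ≤ (1 - f₁) / (3 - f₁ - f₂) ∧ 0 ≤ (1 - f₂) / (3 - f₁ - f₂) ∧
      1 ≤ 0 + ((2 - f₁) / (1 - f₁)) * ((1 - f₁) / (3 - f₁ - f₂)) + (1 - f₂) / (3 - f₁ - f₂) ∧
      1 ≤ 0 + (1 - f₁) / (3 - f₁ - f₂) + ((2 - f₂) / (1 - f₂)) * ((1 - f₂) / (3 - f₁ - f₂)) ∧
      1 - 1 / (3 - f₁ - f₂) = 0 + (1 - f₁) / (3 - f₁ - f₂) + (1 - f₂) / (3 - f₁ - f₂)) :=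
  stmt_8_general f₁ f₂ hf1' hf2'
end

section
/- Let ψ₁,…,ψ_m : ℝ² → ℝ be convex positively homogeneous functions, let r¹,…,r^k ∈ ℝ², and suppose r^j = λr¹ + (1−λ)r² for some index j ∉ {1,2} and some λ ∈ (0,1). Then the linear program min{Σᵢ sᵢ : Σᵢ ψ_p(rⁱ)sᵢ ≥ 1 for p = 1..m, s ≥ 0} over all k variables has the same optimal value as the linear program obtained by deleting variable s_j. -/
/-- If a ray `r^j` is a convex combination of rays `r^{i₁}` and `r^{i₂}`, then
deleting the variable `s_j` does not change the optimal value of the LP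
`min Σ sᵢ` s.t. `Σ ψ_p(rⁱ) sᵢ ≥ 1` for all `p`, `s ≥ 0`, where the `ψ_p` are
convex and positively homogeneous. -/
theorem stmt_13 (m k : ℕ) (ψ : Fin m → (Fin 2 → ℝ) → ℝ)
    (hconv : ∀ p, ConvexOn ℝ Set.univ (ψ p))
    (hhom : ∀ p (c : ℝ), 0 ≤ c → ∀ x, ψ p (c • x) = c * ψ p x)
    (r : Fin k → Fin 2 → ℝ) (j i₁ i₂ : Fin k)
    (hji₁ : j ≠ i₁) (hji₂ : j ≠ i₂) (hi : i₁ ≠ i₂)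
    (lam : ℝ) (hlam0 : 0 < lam) (hlam1 : lam < 1)
    (hcomb : r j = lam • r i₁ + (1 - lam) • r i₂) :
    sInf {v : ℝ | ∃ s : Fin k → ℝ, (∀ i, 0 ≤ s i) ∧
        (∀ p, 1 ≤ ∑ i, ψ p (r i) * s i) ∧ v = ∑ i, s i} =
    sInf {v : ℝ | ∃ s : Fin k → ℝ, (∀ i, 0 ≤ s i) ∧ s j = 0 ∧
        (∀ p, 1 ≤ ∑ i, ψ p (r i) * s i) ∧ v = ∑ i, s i} := by
  congr 1
  ext v
  constructor
  · rintro ⟨s, hs0, hs1, rfl⟩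
    set s' : Fin k → ℝ := fun i =>
      s i + (lam * s j) * (if i = i₁ then (1:ℝ) else 0)
        + ((1 - lam) * s j) * (if i = i₂ then (1:ℝ) else 0)
        - s j * (if i = j then (1:ℝ) else 0) with hs'
    have key : ∀ g : Fin k → ℝ, ∑ i, g i * s' i
        = (∑ i, g i * s i) + (lam * s j) * g i₁ + ((1 - lam) * s j) * g i₂
          - s j * g j := by
      intro g
      simp only [hs', mul_add, mul_sub, Finset.sum_sub_distrib,
        Finset.sum_add_distrib, mul_ite, mul_one, mul_zero,
        Finset.sum_ite_eq', Finset.mem_univ, if_true]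
      ring
    have hkey : ∀ p, ψ p (r j) ≤ lam * ψ p (r i₁) + (1 - lam) * ψ p (r i₂) := by
      intro p
      have := (hconv p).2 (Set.mem_univ (r i₁)) (Set.mem_univ (r i₂))
        hlam0.le (by linarith : (0:ℝ) ≤ 1 - lam) (by ring)
      rw [hcomb]; simpa using this
    have hsj : s' j = 0 := by
      simp [hs', hji₁, hji₂]
    refine ⟨s', ?_, hsj, ?_, ?_⟩
    · intro i
      rcases eq_or_ne i j with rfl | hij
      · rw [hsj]
      · simp only [hs', hij, if_false]
        split_ifs <;> nlinarith [hs0 i, hs0 j, hlam0.le, hlam1.le]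
    · intro p
      have h1 := hs1 p
      have h2 := mul_le_mul_of_nonneg_left (hkey p) (hs0 j)
      rw [key]
      nlinarith
    · have := key (fun _ => 1)
      simp only [one_mul] at this
      linarith
  · rintro ⟨s, h0, _, h1, rfl⟩
    exact ⟨s, h0, h1, rfl⟩
end

section
/- For every α > 1 there exist real parameters t₁, t₂, t₃ with −t₁ < t₂ < −t₃ and t₁ − t₃ ≥ α, and with μ₁ = μ₃ = 1, such that for every f₂ ∈ (0,1) the linear program of the previous statement has optimal value at most 1/α. -/
/-!
The point `s = ((1 - f₂) / (μ₁ (t₁ - t₃)), 0, f₂ / (μ₃ (t₁ - t₃)))` is feasible for the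
pseudo-split LP whenever `t₁ > t₃`: it meets the first and third constraints with equality, and
the second one because `(t₁ + t₂) + (-t₃ - t₂) = t₁ - t₃`. With `μ₁ = μ₃ = 1` its objective value
is `1 / (t₁ - t₃)`, so taking `t₁ - t₃ = α` bounds the optimum by `1 / α`, independently of
`μ₂` and `f₂`.
-/

def pseudoSplitLPValues (μ₁ μ₂ μ₃ f₂ t₁ t₂ t₃ : ℝ) : Set ℝ :=
  {v : ℝ | ∃ s₁ s₂ s₃ : ℝ, 0 ≤ s₁ ∧ 0 ≤ s₂ ∧ 0 ≤ s₃ ∧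
    1 ≤ (μ₂ * (t₁ + t₂) / (1 - f₂)) * s₂ + (μ₃ * (t₁ - t₃) / f₂) * s₃ ∧
    1 ≤ (μ₁ * (t₁ + t₂) / (1 - f₂)) * s₁ + (μ₃ * (-t₃ - t₂) / f₂) * s₃ ∧
    1 ≤ (μ₁ * (t₁ - t₃) / (1 - f₂)) * s₁ + (μ₂ * (-t₃ - t₂) / f₂) * s₂ ∧
    v = s₁ + s₂ + s₃}

lemma pseudoSplitLPValues_bddBelow (μ₁ μ₂ μ₃ f₂ t₁ t₂ t₃ : ℝ) :
    BddBelow (pseudoSplitLPValues μ₁ μ₂ μ₃ f₂ t₁ t₂ t₃) := by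
  refine ⟨0, ?_⟩
  rintro v ⟨s₁, s₂, s₃, hs₁, hs₂, hs₃, -, -, -, rfl⟩
  positivity

lemma mem_pseudoSplitLPValues {μ₁ μ₃ f₂ t₁ t₃ : ℝ} (μ₂ t₂ : ℝ) (hμ₁ : 0 < μ₁) (hμ₃ : 0 < μ₃)
    (hf₂ : 0 < f₂) (hf₂' : f₂ < 1) (ht : t₃ < t₁) :
    ((1 - f₂) / μ₁ + f₂ / μ₃) / (t₁ - t₃) ∈ pseudoSplitLPValues μ₁ μ₂ μ₃ f₂ t₁ t₂ t₃ := by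
  have hf : 1 - f₂ ≠ 0 := by linarith
  have hd : t₁ - t₃ ≠ 0 := by linarith
  refine ⟨(1 - f₂) / (μ₁ * (t₁ - t₃)), 0, f₂ / (μ₃ * (t₁ - t₃)),
    div_nonneg (by linarith) (by nlinarith), le_rfl, div_nonneg hf₂.le (by nlinarith),
    le_of_eq ?_, le_of_eq ?_, le_of_eq ?_, ?_⟩ <;> field_simp <;> ring

lemma sInf_pseudoSplitLPValues_le {μ₁ μ₃ f₂ t₁ t₃ : ℝ} (μ₂ t₂ : ℝ) (hμ₁ : 0 < μ₁)
    (hμ₃ : 0 < μ₃) (hf₂ : 0 < f₂) (hf₂' : f₂ < 1) (ht : t₃ < t₁) :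
    sInf (pseudoSplitLPValues μ₁ μ₂ μ₃ f₂ t₁ t₂ t₃) ≤ ((1 - f₂) / μ₁ + f₂ / μ₃) / (t₁ - t₃) :=
  csInf_le (pseudoSplitLPValues_bddBelow ..) (mem_pseudoSplitLPValues μ₂ t₂ hμ₁ hμ₃ hf₂ hf₂' ht)

/-- For every `α > 1` there are parameters `t₁, t₂, t₃` with `-t₁ < t₂ < -t₃` and
`t₁ - t₃ ≥ α` such that, with `μ₁ = μ₃ = 1`, for every `μ₂ > 0` and every
`f₂ ∈ (0,1)` the pseudo-split LP has optimal value at most `1/α`. -/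
theorem stmt_16 (α : ℝ) (hα : 1 < α) :
    ∃ t₁ t₂ t₃ : ℝ, -t₁ < t₂ ∧ t₂ < -t₃ ∧ α ≤ t₁ - t₃ ∧
      ∀ μ₂ : ℝ, 0 < μ₂ → ∀ f₂ : ℝ, 0 < f₂ → f₂ < 1 →
        sInf {v : ℝ | ∃ s₁ s₂ s₃ : ℝ, 0 ≤ s₁ ∧ 0 ≤ s₂ ∧ 0 ≤ s₃ ∧
            1 ≤ (μ₂ * (t₁ + t₂) / (1 - f₂)) * s₂ + (1 * (t₁ - t₃) / f₂) * s₃ ∧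
            1 ≤ (1 * (t₁ + t₂) / (1 - f₂)) * s₁ + (1 * (-t₃ - t₂) / f₂) * s₃ ∧
            1 ≤ (1 * (t₁ - t₃) / (1 - f₂)) * s₁ + (μ₂ * (-t₃ - t₂) / f₂) * s₂ ∧
            v = s₁ + s₂ + s₃} ≤ 1 / α := by
  refine ⟨α, -α / 2, 0, by linarith, by linarith, by linarith, fun μ₂ _ f₂ hf₂ hf₂' => ?_⟩
  calc sInf (pseudoSplitLPValues 1 μ₂ 1 f₂ α (-α / 2) 0)
      ≤ ((1 - f₂) / 1 + f₂ / 1) / (α - 0) :=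
        sInf_pseudoSplitLPValues_le μ₂ _ one_pos one_pos hf₂ hf₂' (by linarith)
    _ = 1 / α := by ring
end
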